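/- Let D be an orientation of a graph G and η an index function with η(v) = d⁺_D(v) for every vertex v. Then c_{P_G, η} = ±(|EE(D)| − |OE(D)|), where EE(D) and OE(D) are the sets of spanning Eulerian sub-digraphs of D with an even and odd number of edges, respectively. -/

import Mathlib

variable {V : Type*} [Fintype V] [DecidableEq V]

/-- Out-degree of `v` in the digraph with arc set `A`. -/
def outDeg (A : Finset (V × V)) (v : V) : ℕ := (A.filter (fun p => p.1 = v)).card

/-- In-degree of `v` in the digraph with arc set `A`. -/
def inDeg (A : Finset (V × V)) (v : V) : ℕ := (A.filter (fun p => p.2 = v)).card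

/-- A digraph is Eulerian if every vertex has equal in- and out-degree. -/
def IsEulerian (A : Finset (V × V)) : Prop := ∀ v, outDeg A v = inDeg A v

open scoped Classical in
/-- The spanning Eulerian sub-digraphs of `A` with an even number of edges. -/
noncomputable def EE (A : Finset (V × V)) : Finset (Finset (V × V)) :=
  A.powerset.filter (fun B => IsEulerian B ∧ Even B.card)

open scoped Classical in
/-- The spanning Eulerian sub-digraphs of `A` with an odd number of edges. -/
noncomputable def OE (A : Finset (V × V)) : Finset (Finset (V × V)) :=
  A.powerset.filter (fun B => IsEulerian B ∧ Odd B.card)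

/-- `A` is an orientation of the graph `G`: every arc is an edge of `G`, and each edge of `G`
receives exactly one of its two possible directions. -/
def IsOrientation (G : SimpleGraph V) (A : Finset (V × V)) : Prop :=
  (∀ p ∈ A, G.Adj p.1 p.2) ∧ ∀ u v, G.Adj u v → ((u, v) ∈ A ↔ (v, u) ∉ A)

/-- The arc `a` lies on a directed cycle of the digraph `A` (a closed directed walk with
distinct vertices). -/
def OnDirectedCycle (A : Finset (V × V)) (a : V × V) : Prop :=
  ∃ (n : ℕ) (f : Fin (n + 2) → V), Function.Injective f ∧
    (∀ i, (f i, f (i + 1)) ∈ A) ∧ ∃ i, (f i, f (i + 1)) = a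

/-- The arc set of a directed cycle (a closed directed walk with distinct vertices). -/
def IsDirectedCycle (C : Finset (V × V)) : Prop :=
  ∃ (n : ℕ) (f : Fin (n + 2) → V), Function.Injective f ∧
    C = Finset.image (fun i => (f i, f (i + 1))) Finset.univ

/-- The reversal of a digraph: every arc reversed. -/
def reverseArcs (C : Finset (V × V)) : Finset (V × V) := C.image (fun p => (p.2, p.1))

/-- The symmetric difference of two (edge-disjoint) digraphs: their union with all digons
(pairs of oppositely-oriented arcs) deleted. -/
def symmDiffArcs (H₁ H₂ : Finset (V × V)) : Finset (V × V) :=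
  (H₁ ∪ H₂).filter (fun p => (p.2, p.1) ∉ H₁ ∪ H₂)

open MvPolynomial in
/-- The graph polynomial `P_G(x) = ∏_{uv ∈ E(G), u < v} (x_v - x_u)` over `ℤ`. -/
noncomputable def graphPoly [LinearOrder V] (G : SimpleGraph V) : MvPolynomial V ℤ :=
  open scoped Classical in
  ∏ p ∈ Finset.univ.filter (fun p : V × V => p.1 < p.2 ∧ G.Adj p.1 p.2),
    (X p.2 - X p.1)

/-!
Reorienting each factor along `D` gives `P_G = ±∏_{(u,v) ∈ D} (x_u - x_v)`. Expanding, the choice of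
the head `x_v` on an arc set `B ⊆ D` and of the tail elsewhere contributes `(-1)^|B|` times the
monomial with exponent `d⁺_{D∖B}(v) + d⁻_B(v) = d⁺_D(v) - d⁺_B(v) + d⁻_B(v)` at `v`. This is `x^η`
exactly when `B` is Eulerian, so the coefficient is `∑_{B Eulerian} (-1)^|B| = |EE(D)| - |OE(D)|`.
-/

open Finset MvPolynomial

theorem Finset.sum_single_one_apply {α β : Type*} [DecidableEq β] (s : Finset α) (f : α → β)
    (b : β) : (∑ a ∈ s, Finsupp.single (f a) 1) b = #{a ∈ s | f a = b} := by
  rw [sum_apply', card_filter]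
  simp only [Finsupp.single_apply]

theorem MvPolynomial.coeff_prod_X_sub_X {R σ α : Type*} [CommRing R] [DecidableEq σ]
    [DecidableEq α] (s : Finset α) (f g : α → σ) (m : σ →₀ ℕ) :
    coeff m (∏ i ∈ s, (X (f i) - X (g i)) : MvPolynomial σ R) =
      ∑ t ∈ s.powerset, if ∑ i ∈ s \ t, Finsupp.single (f i) 1 + ∑ i ∈ t, Finsupp.single (g i) 1 = m
        then (-1) ^ #t else 0 := by
  rw [prod_sub, coeff_sum]
  refine sum_congr rfl fun t _ => ?_
  simp only [X, ← monomial_sum_one, monomial_mul, mul_one, ← C_1, ← C_neg, ← C_pow, coeff_C_mul,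
    coeff_monomial, mul_ite, mul_zero, mul_assoc]

section

variable {V : Type*} [DecidableEq V]

theorem outDeg_sdiff_add_outDeg {A B : Finset (V × V)} (h : B ⊆ A) (v : V) :
    outDeg (A \ B) v + outDeg B v = outDeg A v := by
  rw [outDeg, outDeg, outDeg, ← card_union_of_disjoint (disjoint_filter_filter sdiff_disjoint),
    ← filter_union, sdiff_union_of_subset h]

theorem sum_single_eq_outDeg_iff_isEulerian {A B : Finset (V × V)} (hB : B ⊆ A) {η : V →₀ ℕ}
    (hη : ∀ v, η v = outDeg A v) :
    ∑ a ∈ A \ B, Finsupp.single a.1 1 + ∑ a ∈ B, Finsupp.single a.2 1 = η ↔ IsEulerian B := by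
  refine Finsupp.ext_iff.trans (forall_congr' fun v => ?_)
  rw [Finsupp.add_apply, sum_single_one_apply, sum_single_one_apply, hη]
  have hsplit := outDeg_sdiff_add_outDeg hB v
  change outDeg (A \ B) v + inDeg B v = outDeg A v ↔ outDeg B v = inDeg B v
  omega

open scoped Classical in
theorem sum_isEulerian_neg_one_pow (A : Finset (V × V)) :
    ∑ B ∈ A.powerset, (if IsEulerian B then (-1 : ℤ) ^ #B else 0) = #(EE A) - #(OE A) := by
  rw [← sum_filter, ← sum_filter_add_sum_filter_not _ (fun B => Even #B), filter_filter,
    filter_filter, sum_congr rfl fun B hB => (mem_filter.1 hB).2.2.neg_one_pow,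
    sum_congr rfl fun B hB => (Nat.not_even_iff_odd.1 (mem_filter.1 hB).2.2).neg_one_pow]
  simp only [sum_const, nsmul_eq_mul, mul_one, mul_neg, EE, OE, Nat.not_even_iff_odd]
  ring

open scoped Classical in
theorem IsOrientation.prod_sort_eq_prod_edges [Fintype V] [LinearOrder V] {G : SimpleGraph V}
    {A : Finset (V × V)} (hA : IsOrientation G A) {M : Type*} [CommMonoid M] (F : V × V → M) :
    ∏ a ∈ A, F (if a.1 < a.2 then a else a.swap) =
      ∏ p ∈ Finset.univ.filter (fun p : V × V => p.1 < p.2 ∧ G.Adj p.1 p.2), F p := by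
  have swap_mem_iff {p : V × V} (hp : G.Adj p.1 p.2) : p.swap ∈ A ↔ p ∉ A := by
    rw [hA.2 p.1 p.2 hp]; tauto
  refine prod_nbij' (fun a => if a.1 < a.2 then a else a.swap)
    (fun p => if p ∈ A then p else p.swap) ?_ ?_ ?_ ?_ fun _ _ => rfl
  · intro a ha
    have hadj := hA.1 a ha
    simp only [mem_filter, mem_univ, true_and]
    split_ifs with h
    · exact ⟨h, hadj⟩
    · exact ⟨lt_of_le_of_ne (not_lt.1 h) hadj.ne.symm, hadj.symm⟩
  · intro p hp
    simp only [mem_filter, mem_univ, true_and] at hp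
    split_ifs with h
    · exact h
    · exact (swap_mem_iff hp.2).2 h
  · intro a ha
    by_cases h : a.1 < a.2
    · simp [h, ha]
    · have : a.swap ∉ A := fun h' => (swap_mem_iff (hA.1 a ha)).1 h' ha
      simp [h, this]
  · intro p hp
    simp only [mem_filter, mem_univ, true_and] at hp
    by_cases h : p ∈ A
    · simp [h, hp.1]
    · simp [h, not_lt_of_gt hp.1]

theorem IsOrientation.prod_X_sub_X_eq [Fintype V] [LinearOrder V] {G : SimpleGraph V}
    {A : Finset (V × V)} (hA : IsOrientation G A) :
    ∏ a ∈ A, (X a.1 - X a.2 : MvPolynomial V ℤ) = (-1) ^ #{a ∈ A | a.1 < a.2} * graphPoly G := by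
  have sign_mul_sorted (a : V × V) : (X a.1 - X a.2 : MvPolynomial V ℤ) =
      (if a.1 < a.2 then -1 else 1) *
        (X (if a.1 < a.2 then a else a.swap).2 - X (if a.1 < a.2 then a else a.swap).1) := by
    split_ifs <;> simp
  rw [prod_congr rfl fun a _ => sign_mul_sorted a, prod_mul_distrib, prod_ite, prod_const,
    prod_const_one, mul_one, hA.prod_sort_eq_prod_edges (fun p => X p.2 - X p.1), graphPoly]

open scoped Classical in
theorem coeff_prod_X_sub_X_eq_EE_sub_OE (A : Finset (V × V)) {η : V →₀ ℕ}
    (hη : ∀ v, η v = outDeg A v) :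
    coeff η (∏ a ∈ A, (X a.1 - X a.2) : MvPolynomial V ℤ) = #(EE A) - #(OE A) := by
  rw [coeff_prod_X_sub_X, ← sum_isEulerian_neg_one_pow]
  exact sum_congr rfl fun B hB =>
    if_congr (sum_single_eq_outDeg_iff_isEulerian (mem_powerset.1 hB) hη) rfl rfl

end

/-- Alon–Tarsi: if `D` is an orientation of `G` and `η(v) = d⁺_D(v)` for every vertex,
then `c_{P_G,η} = ±(|EE(D)| - |OE(D)|)`. -/
theorem coeff_eq_pm_EE_sub_OE [LinearOrder V] (G : SimpleGraph V)
    (A : Finset (V × V)) (hA : IsOrientation G A) (η : V →₀ ℕ)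
    (hη : ∀ v, η v = outDeg A v) :
    MvPolynomial.coeff η (graphPoly G) = ((EE A).card : ℤ) - (OE A).card ∨
      MvPolynomial.coeff η (graphPoly G) = -(((EE A).card : ℤ) - (OE A).card) := by
  have hcoeff := coeff_prod_X_sub_X_eq_EE_sub_OE A hη
  rw [hA.prod_X_sub_X_eq] at hcoeff
  rcases neg_one_pow_eq_or (MvPolynomial V ℤ) #{a ∈ A | a.1 < a.2} with hsign | hsign
  · left
    rwa [hsign, one_mul] at hcoeff
  · right
    rwa [hsign, neg_one_mul, coeff_neg, neg_eq_iff_eq_neg] at hcoeff
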